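/- Lower bound instance: there is a family of graphs G_n on n vertices and an infinite sequence of pairs of edge updates (one insertion, one deletion per pair) such that after each pair of updates, every DFS tree of the current graph rooted at r differs from every DFS tree of the previous graph in at least Ω(n) tree edges (i.e., at least cn edges change status between tree edge and non-tree edge for some constant c > 0). -/
import Mathlib


/-- `u` is an ancestor of `v` with respect to the parent function `par`
(every vertex is an ancestor of itself). -/
def IsAncestor {V : Type*} (par : V → V) (u v : V) : Prop := ∃ n : ℕ, par^[n] v = u

/-- A spanning tree of `G` rooted at `r`, given by a parent function:
the root is its own parent, every vertex reaches the root by iterating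
the parent function, and each non-root vertex is adjacent to its parent. -/
structure RootedSpanningTree {V : Type*} (G : SimpleGraph V) (r : V) where
  par : V → V
  par_root : par r = r
  reaches_root : ∀ v, ∃ n : ℕ, par^[n] v = r
  adj_par : ∀ v, v ≠ r → G.Adj (par v) v

/-- Every edge of `G` joins two vertices in ancestor-descendant relation
in the tree, i.e. there are no cross edges (all non-tree edges are back edges). -/
def RootedSpanningTree.noCrossEdges {V : Type*} {G : SimpleGraph V} {r : V}
    (T : RootedSpanningTree G r) : Prop :=
  ∀ u v, G.Adj u v → IsAncestor T.par u v ∨ IsAncestor T.par v u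

/-- `v` lies on the ancestor-descendant tree path from `x` down to `y`
(where `x` is an ancestor of `y`). -/
def OnTreePath {V : Type*} (par : V → V) (x y v : V) : Prop :=
  IsAncestor par x v ∧ IsAncestor par v y

/-- The set of tree edges of a rooted spanning tree. -/
def treeEdges {V : Type*} {G : SimpleGraph V} {r : V}
    (T : RootedSpanningTree G r) : Set (Sym2 V) :=
  {e : Sym2 V | ∃ v, v ≠ r ∧ e = s(T.par v, v)}


namespace DFSLB

inductive Vx (m : ℕ) : Type
  | r | x | y | u (i : Fin m)
deriving DecidableEq

open Vx

def vEquiv (m : ℕ) : Vx m ≃ (Fin m ⊕ Fin 3) where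
  toFun v := match v with
    | r => Sum.inr 0
    | x => Sum.inr 1
    | y => Sum.inr 2
    | u i => Sum.inl i
  invFun s := match s with
    | Sum.inl i => u i
    | Sum.inr ⟨0, _⟩ => r
    | Sum.inr ⟨1, _⟩ => x
    | Sum.inr ⟨2, _⟩ => y
  left_inv v := by cases v <;> rfl
  right_inv s := by
    rcases s with i | ⟨k, hk⟩
    · rfl
    · interval_cases k <;> rfl

instance (m : ℕ) : Fintype (Vx m) := Fintype.ofEquiv _ (vEquiv m).symm

lemma card_Vx (m : ℕ) : Fintype.card (Vx m) = m + 3 := by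
  rw [Fintype.card_congr (vEquiv m)]
  simp

variable {m : ℕ}

def ES (m : ℕ) (p : Vx m) : Set (Sym2 (Vx m)) :=
  insert s(Vx.r, p) {e | ∃ i, e = s(Vx.x, Vx.u i) ∨ e = s(Vx.y, Vx.u i)}

def myG (m : ℕ) (p : Vx m) : SimpleGraph (Vx m) :=
  SimpleGraph.fromEdgeSet (ES m p)

lemma myG_adj {p a b : Vx m} :
    (myG m p).Adj a b ↔ (s(a,b) ∈ ES m p ∧ a ≠ b) := by
  simp [myG, SimpleGraph.fromEdgeSet_adj]

lemma mem_ES {p a b : Vx m} :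
    s(a,b) ∈ ES m p ↔ ((a = Vx.r ∧ b = p) ∨ (a = p ∧ b = Vx.r) ∨
      ∃ i, (a = Vx.x ∧ b = u i) ∨ (a = u i ∧ b = Vx.x) ∨
           (a = Vx.y ∧ b = u i) ∨ (a = u i ∧ b = Vx.y)) := by
  simp only [ES, Set.mem_insert_iff, Set.mem_setOf_eq, Sym2.eq_iff]
  constructor
  · rintro (h | ⟨i, h | h⟩)
    · tauto
    · exact Or.inr (Or.inr ⟨i, by tauto⟩)
    · exact Or.inr (Or.inr ⟨i, by tauto⟩)
  · rintro (h | h | ⟨i, h⟩)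
    · tauto
    · tauto
    · right; exact ⟨i, by tauto⟩

def PQ (m : ℕ) (p q : Vx m) : Prop :=
  (p = Vx.x ∧ q = Vx.y) ∨ (p = Vx.y ∧ q = Vx.x)

lemma PQ.symm' {p q : Vx m} (h : PQ m p q) : PQ m q p := by
  unfold PQ at *; tauto

lemma adj_xu {p : Vx m} (i : Fin m) : (myG m p).Adj Vx.x (u i) := by
  rw [myG_adj, mem_ES]; exact ⟨Or.inr (Or.inr ⟨i, by tauto⟩), by simp⟩

lemma adj_yu {p : Vx m} (i : Fin m) : (myG m p).Adj Vx.y (u i) := by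
  rw [myG_adj, mem_ES]; exact ⟨Or.inr (Or.inr ⟨i, by tauto⟩), by simp⟩

lemma adj_rp {p q : Vx m} (hpq : PQ m p q) : (myG m p).Adj Vx.r p := by
  rw [myG_adj, mem_ES]
  rcases hpq with ⟨hp, _⟩ | ⟨hp, _⟩ <;> subst hp <;> exact ⟨by tauto, by simp⟩

/-- neighbors of `u i` are only `x` and `y` -/
lemma nbr_u {p q w : Vx m} (hpq : PQ m p q) {i : Fin m}
    (h : (myG m p).Adj w (u i)) : w = Vx.x ∨ w = Vx.y := by
  rw [myG_adj, mem_ES] at h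
  rcases hpq with ⟨hp, hq⟩ | ⟨hp, hq⟩ <;> subst hp <;>
    rcases h with ⟨⟨h1,h2⟩|⟨h1,h2⟩|⟨j,⟨h1,h2⟩|⟨h1,h2⟩|⟨h1,h2⟩|⟨h1,h2⟩⟩, hne⟩ <;> simp_all

/-- neighbors of `q` (the spoke) are only the `u i` -/
lemma nbr_q {p q w : Vx m} (hpq : PQ m p q)
    (h : (myG m p).Adj w q) : ∃ i, w = u i := by
  rw [myG_adj, mem_ES] at h
  rcases hpq with ⟨hp, hq⟩ | ⟨hp, hq⟩ <;> subst hp <;> subst hq <;>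
    rcases h with ⟨⟨h1,h2⟩|⟨h1,h2⟩|⟨j,⟨h1,h2⟩|⟨h1,h2⟩|⟨h1,h2⟩|⟨h1,h2⟩⟩, hne⟩ <;>
    first | (exact ⟨j, h1⟩) | simp_all

end DFSLB

section Anc

variable {W : Type*}

lemma cycle_eq_root {par : W → W} {rt a : W} (hr : par rt = rt)
    (hreach : ∃ t, par^[t] a = rt) {k : ℕ} (hk : k ≠ 0)
    (hcyc : par^[k] a = a) : a = rt := by
  obtain ⟨t, ht⟩ := hreach
  have hcy : ∀ s, par^[k * s] a = a := by
    intro s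
    induction s with
    | zero => simp
    | succ n ih =>
        have : k * (n + 1) = k * n + k := by ring
        rw [this, Function.iterate_add_apply, hcyc, ih]
  have hfix : par^[k * (t + 1)] a = rt := by
    have h1 : k * (t + 1) = (k * (t + 1) - t) + t := by
      have : t ≤ k * (t + 1) := by nlinarith [Nat.one_le_iff_ne_zero.2 hk]
      omega
    rw [h1, Function.iterate_add_apply, ht, Function.iterate_fixed hr]
  rw [← hfix, hcy]

lemma anc_antisymm {par : W → W} {rt a b : W} (hr : par rt = rt)
    (hra : ∃ t, par^[t] a = rt)
    (hab : IsAncestor par a b) (hba : IsAncestor par b a) : a = b := by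
  obtain ⟨n, hn⟩ := hab
  obtain ⟨k, hk⟩ := hba
  rcases Nat.eq_zero_or_pos (n + k) with h0 | hpos
  · have hn0 : n = 0 := by omega
    subst hn0; exact hn.symm
  · have hcyc : par^[n + k] a = a := by
      rw [Function.iterate_add_apply, hk, hn]
    have ha : a = rt := cycle_eq_root hr hra (by omega) hcyc
    have hb : b = rt := by
      rw [← hk, ha, Function.iterate_fixed hr]
    rw [ha, hb]

end Anc

namespace DFSLB

open Vx

variable {m : ℕ} {p q : Vx m}

lemma key (hpq : PQ m p q) (T : RootedSpanningTree (myG m p) Vx.r)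
    (hT : T.noCrossEdges) :
    ∃ i₀ : Fin m, T.par q = u i₀ ∧ ∀ i, i ≠ i₀ → T.par (u i) = q := by
  have hqr : q ≠ Vx.r := by rcases hpq with ⟨_, h⟩ | ⟨_, h⟩ <;> subst h <;> simp
  have hpr : p ≠ Vx.r := by rcases hpq with ⟨h, _⟩ | ⟨h, _⟩ <;> subst h <;> simp
  have hpq_ne : p ≠ q := by
    rcases hpq with ⟨h1, h2⟩ | ⟨h1, h2⟩ <;> subst h1 <;> subst h2 <;> simp
  have hqu : ∀ i : Fin m, q ≠ u i := by
    intro i; rcases hpq with ⟨_, h⟩ | ⟨_, h⟩ <;> subst h <;> simp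
  have hxyq : ∀ w : Vx m, (w = Vx.x ∨ w = Vx.y) → w = p ∨ w = q := by
    intro w hw; rcases hpq with ⟨h1, h2⟩ | ⟨h1, h2⟩ <;> subst h1 <;> subst h2 <;> tauto
  have hadjqu : ∀ i : Fin m, (myG m p).Adj q (u i) := by
    intro i; rcases hpq with ⟨_, h⟩ | ⟨_, h⟩ <;> subst h
    · exact adj_yu i
    · exact adj_xu i
  obtain ⟨i₀, hi₀⟩ := nbr_q hpq (T.adj_par q hqr)
  have hu0 : T.par (u i₀) = p := by
    have h1 := nbr_u hpq (T.adj_par (u i₀) (by simp))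
    rcases hxyq _ h1 with h | h
    · exact h
    · exfalso
      have hcyc : T.par^[2] q = q := by
        show T.par (T.par q) = q
        rw [hi₀, h]
      exact hqr (cycle_eq_root T.par_root (T.reaches_root q) two_ne_zero hcyc)
  have hanc_pq : IsAncestor T.par p q :=
    ⟨2, by show T.par (T.par q) = p; rw [hi₀, hu0]⟩
  have hkey : ∀ i, T.par (u i) = p → T.par q = u i := by
    intro i hi
    rcases hT q (u i) (hadjqu i) with ⟨n, hn⟩ | ⟨n, hn⟩
    · -- par^[n] (u i) = q
      match n, hn with
      | 0, hn => simp at hn; exact (hqu i hn.symm).elim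
      | (n + 1), hn =>
        exfalso
        rw [Function.iterate_succ_apply, hi] at hn
        exact hpq_ne
          (anc_antisymm T.par_root (T.reaches_root q) ⟨n, hn⟩ hanc_pq).symm
    · -- par^[n] q = u i
      match n, hn with
      | 0, hn => simp at hn; exact (hqu i hn).elim
      | 1, hn => exact hn
      | (n + 2), hn =>
        exfalso
        rw [Function.iterate_add_apply] at hn
        have h2q : T.par^[2] q = p := by
          show T.par (T.par q) = p
          rw [hi₀, hu0]
        rw [h2q] at hn
        have h2 : T.par^[n + 1] p = p := by
          rw [Function.iterate_succ_apply', hn, hi]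
        exact hpr (cycle_eq_root T.par_root (T.reaches_root p) (Nat.succ_ne_zero n) h2)
  refine ⟨i₀, hi₀, ?_⟩
  intro i hne
  have h1 := nbr_u hpq (T.adj_par (u i) (by simp))
  rcases hxyq _ h1 with h | h
  · exfalso
    have := hkey i h
    rw [hi₀] at this
    exact hne (by injection this with h'; exact h'.symm) 
  · exact h

end DFSLB

namespace DFSLB

open Vx

variable {m : ℕ} {p q : Vx m}

lemma myG_connected (hpq : PQ m p q) (hm : 0 < m) : (myG m p).Connected := by
  rw [SimpleGraph.connected_iff]
  have hadj_pu : ∀ i : Fin m, (myG m p).Adj p (u i) := by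
    intro i; rcases hpq with ⟨h, _⟩ | ⟨h, _⟩ <;> subst h
    · exact adj_xu i
    · exact adj_yu i
  have hadj_qu : ∀ i : Fin m, (myG m p).Adj q (u i) := by
    intro i; rcases hpq with ⟨_, h⟩ | ⟨_, h⟩ <;> subst h
    · exact adj_yu i
    · exact adj_xu i
  have hr : ∀ v, (myG m p).Reachable Vx.r v := by
    have h0 : (myG m p).Reachable Vx.r p := (adj_rp hpq).reachable
    have hu : ∀ i, (myG m p).Reachable Vx.r (u i) := fun i =>
      h0.trans (hadj_pu i).reachable
    have hq : (myG m p).Reachable Vx.r q :=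
      (hu ⟨0, hm⟩).trans ((hadj_qu ⟨0, hm⟩).symm.reachable)
    intro v
    have hv : v = Vx.r ∨ v = p ∨ v = q ∨ ∃ i, v = u i := by
      rcases hpq with ⟨h1, h2⟩ | ⟨h1, h2⟩ <;> subst h1 <;> subst h2 <;>
        cases v <;> simp
    rcases hv with h | h | h | ⟨i, h⟩ <;> subst h
    · exact SimpleGraph.Reachable.refl _
    · exact h0
    · exact hq
    · exact hu i
  exact ⟨fun a b => (hr a).symm.trans (hr b), ⟨Vx.r⟩⟩

lemma ES_no_diag (e : Sym2 (Vx m)) (hpq : PQ m p q) (he : e ∈ ES m p) :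
    ¬ e.IsDiag := by
  rcases he with h | h
  · subst h
    rw [Sym2.isDiag_iff_proj_eq]
    rcases hpq with ⟨h, _⟩ | ⟨h, _⟩ <;> subst h <;> simp
  · obtain ⟨i, h | h⟩ := h <;> subst h <;> rw [Sym2.isDiag_iff_proj_eq] <;> simp

lemma edgeSet_myG (hpq : PQ m p q) : (myG m p).edgeSet = ES m p := by
  rw [myG, SimpleGraph.edgeSet_fromEdgeSet]
  ext e
  simp only [Set.mem_diff, Set.mem_setOf_eq]
  exact ⟨fun h => h.1, fun h => ⟨h, ES_no_diag e hpq h⟩⟩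

lemma update_eq (hpq : PQ m p q) :
    myG m q = SimpleGraph.fromEdgeSet
      (((myG m p).edgeSet ∪ {s(Vx.r, q)}) \ {s(Vx.r, p)}) := by
  rw [edgeSet_myG hpq]
  have hset : (ES m p ∪ {s(Vx.r, q)}) \ {s(Vx.r, p)} = ES m q := by
    have hrq : s(Vx.r, p) ≠ s(Vx.r, q) := by
      rcases hpq with ⟨h1, h2⟩ | ⟨h1, h2⟩ <;> subst h1 <;> subst h2 <;>
        simp [Sym2.eq_iff]
    have hpu : ∀ i : Fin m, s(Vx.r, p) ≠ s(Vx.x, u i) ∧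
        s(Vx.r, p) ≠ s(Vx.y, u i) := by
      intro i
      rcases hpq with ⟨h1, _⟩ | ⟨h1, _⟩ <;> subst h1 <;>
        exact ⟨by simp [Sym2.eq_iff], by simp [Sym2.eq_iff]⟩
    ext e
    simp only [Set.mem_diff, Set.mem_union, Set.mem_singleton_iff, ES,
      Set.mem_insert_iff, Set.mem_setOf_eq]
    constructor
    · rintro ⟨(h | ⟨i, h | h⟩) | h, h2⟩
      · exact absurd h h2
      · exact Or.inr ⟨i, Or.inl h⟩
      · exact Or.inr ⟨i, Or.inr h⟩
      · exact Or.inl h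
    · rintro (h | ⟨i, h | h⟩)
      · subst h; exact ⟨Or.inr rfl, fun hc => hrq hc.symm⟩
      · subst h
        exact ⟨Or.inl (Or.inr ⟨i, Or.inl rfl⟩), fun hc => (hpu i).1 hc.symm⟩
      · subst h
        exact ⟨Or.inl (Or.inr ⟨i, Or.inr rfl⟩), fun hc => (hpu i).2 hc.symm⟩
  rw [hset]
  rfl

end DFSLB

namespace DFSLB

open Vx

variable {m : ℕ} {p q : Vx m}

lemma count [Fintype (Vx m)] (hpq : PQ m p q)
    (T : RootedSpanningTree (myG m p) Vx.r) (hT : T.noCrossEdges)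
    (T' : RootedSpanningTree (myG m q) Vx.r) (hT' : T'.noCrossEdges) :
    m ≤ (symmDiff (treeEdges T) (treeEdges T')).ncard + 3 := by
  classical
  have hpq_ne : p ≠ q := by
    rcases hpq with ⟨h1, h2⟩ | ⟨h1, h2⟩ <;> subst h1 <;> subst h2 <;> simp
  have hqu : ∀ i : Fin m, q ≠ u i := by
    intro i; rcases hpq with ⟨_, h⟩ | ⟨_, h⟩ <;> subst h <;> simp
  obtain ⟨i₀, hi₀, hpar⟩ := key hpq T hT
  obtain ⟨i₁, hi₁, hpar'⟩ := key hpq.symm' T' hT'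
  set j₂ : Fin m := if h : ∃ j, T'.par q = u j then h.choose else i₀ with hj₂
  set S : Set (Fin m) := {i₀, i₁, j₂} with hS
  have hsub : (fun i : Fin m => s(q, u i)) '' Sᶜ ⊆
      symmDiff (treeEdges T) (treeEdges T') := by
    rintro e ⟨i, hi, rfl⟩
    simp only [hS, Set.mem_compl_iff, Set.mem_insert_iff, Set.mem_singleton_iff,
      not_or] at hi
    obtain ⟨hii₀, hii₁, hij₂⟩ := hi
    rw [Set.mem_symmDiff]
    left
    constructor
    · exact ⟨u i, by simp, by rw [hpar i hii₀]⟩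
    · rintro ⟨v, hvr, hev⟩
      rw [Sym2.eq_iff] at hev
      rcases hev with ⟨h1, h2⟩ | ⟨h1, h2⟩
      · -- q = T'.par v, u i = v
        rw [← h2] at h1
        rw [hpar' i hii₁] at h1
        exact hpq_ne h1.symm
      · -- q = v, T'.par q = u i
        rw [← h1] at h2
        have h2' : T'.par q = u i := h2.symm
        have hex : ∃ j, T'.par q = u j := ⟨i, h2'⟩
        apply hij₂
        rw [hj₂, dif_pos hex]
        have hch : Vx.u i = Vx.u (hex.choose) := h2'.symm.trans hex.choose_spec
        injection hch with h'
  have hinj : Function.Injective (fun i : Fin m => s(q, u i)) := by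
    intro a b h
    simp only [Sym2.eq_iff] at h
    rcases h with ⟨_, h2⟩ | ⟨h1, _⟩
    · injection h2
    · exact absurd h1 (hqu b)
  have h1 : S.ncard ≤ 3 := by
    calc S.ncard ≤ ({i₁, j₂} : Set (Fin m)).ncard + 1 := Set.ncard_insert_le _ _
      _ ≤ (({j₂} : Set (Fin m)).ncard + 1) + 1 := by
            exact Nat.add_le_add_right (Set.ncard_insert_le _ _) 1
      _ ≤ 3 := by rw [Set.ncard_singleton]
  have h2 : S.ncard + Sᶜ.ncard = m := by
    rw [Set.ncard_add_ncard_compl]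
    simp
  have h3 : Sᶜ.ncard = ((fun i : Fin m => s(q, u i)) '' Sᶜ).ncard :=
    (Set.ncard_image_of_injective _ hinj).symm
  have h4 : ((fun i : Fin m => s(q, u i)) '' Sᶜ).ncard ≤
      (symmDiff (treeEdges T) (treeEdges T')).ncard :=
    Set.ncard_le_ncard hsub (Set.toFinite _)
  omega

end DFSLB


/-- Lower bound instance: there is a constant `c > 0` and, for arbitrarily
large `n`, a connected graph on `n` vertices with a root `r` together with an
infinite sequence of updates — each consisting of one edge insertion and one
edge deletion — such that after each update pair, every DFS tree of the
current graph rooted at `r` differs from every DFS tree of the previous graph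
in at least `c * n` edges (edges changing status between tree edge and
non-tree edge). -/
theorem dfs_maintenance_lower_bound :
    ∃ c : ℝ, 0 < c ∧ ∀ N : ℕ, ∃ n : ℕ, N ≤ n ∧
      ∃ (V : Type) (_ : Fintype V) (r : V) (Gseq : ℕ → SimpleGraph V),
        Fintype.card V = n ∧
        (∀ i, (Gseq i).Connected) ∧
        (∀ i, ∃ e₁ e₂ : Sym2 V,
          Gseq (i + 1) =
            SimpleGraph.fromEdgeSet (((Gseq i).edgeSet ∪ {e₁}) \ {e₂})) ∧
        (∀ i, ∀ T : RootedSpanningTree (Gseq i) r, T.noCrossEdges →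
          ∀ T' : RootedSpanningTree (Gseq (i + 1)) r, T'.noCrossEdges →
            c * n ≤ ((symmDiff (treeEdges T) (treeEdges T')).ncard : ℝ)) := by
  classical
  refine ⟨1/2, by norm_num, fun N => ?_⟩
  set n : ℕ := max N 12 with hn
  have h12 : 12 ≤ n := le_max_right N 12
  set m : ℕ := n - 3 with hm
  have hmn : m + 3 = n := by omega
  have hmpos : 0 < m := by omega
  refine ⟨n, le_max_left N 12, DFSLB.Vx m, inferInstance, DFSLB.Vx.r, ?_⟩
  set hub : ℕ → DFSLB.Vx m :=
    fun k => if k % 2 = 0 then DFSLB.Vx.x else DFSLB.Vx.y with hhub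
  set spk : ℕ → DFSLB.Vx m :=
    fun k => if k % 2 = 0 then DFSLB.Vx.y else DFSLB.Vx.x with hspk
  have hPQ : ∀ k, DFSLB.PQ m (hub k) (spk k) := by
    intro k
    by_cases h : k % 2 = 0 <;> simp only [hhub, hspk, h, if_true, if_false,
      if_pos, if_neg] <;> unfold DFSLB.PQ <;> simp [h]
  have hflip : ∀ k, hub (k + 1) = spk k := by
    intro k
    rcases Nat.mod_two_eq_zero_or_one k with h | h
    · have h2 : (k + 1) % 2 = 1 := by omega
      simp [hhub, hspk, h, h2]
    · have h2 : (k + 1) % 2 = 0 := by omega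
      simp [hhub, hspk, h, h2]
  refine ⟨fun k => DFSLB.myG m (hub k), ?_, ?_, ?_, ?_⟩
  · rw [DFSLB.card_Vx]; omega
  · exact fun i => DFSLB.myG_connected (hPQ i) hmpos
  · intro i
    refine ⟨s(DFSLB.Vx.r, spk i), s(DFSLB.Vx.r, hub i), ?_⟩
    show DFSLB.myG m (hub (i + 1)) = _
    rw [hflip i]
    exact DFSLB.update_eq (hPQ i)
  · intro i
    beta_reduce
    have heq : DFSLB.myG m (hub (i + 1)) = DFSLB.myG m (spk i) := by rw [hflip i]
    rw [heq]
    intro T hT T' hT'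
    have hcount := DFSLB.count (hPQ i) T hT T' hT'
    have h1 : (n : ℝ) ≤ ((symmDiff (treeEdges T) (treeEdges T')).ncard : ℝ) + 6 := by
      exact_mod_cast (by omega :
        n ≤ (symmDiff (treeEdges T) (treeEdges T')).ncard + 6)
    have h2 : (12 : ℝ) ≤ (n : ℝ) := by exact_mod_cast h12
    linarith
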